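/- Let F, G, H be finite groups and A a multiplicatively written abelian group. Let (U,μ) be an A-subcharacter of F × G and (V,ν) an A-subcharacter of G × H, and let f ∈ F, g ∈ G, h ∈ H. Then: ᶠᵍ(U,μ) ∼ ᵍʰ(V,ν) if and only if (U,μ) ∼ (V,ν); Γ∩(ᶠᵍU, ᵍʰV) = g·Γ∩(U,V)·g⁻¹, so in particular |Γ∩(ᶠᵍU, ᵍʰV)| = |Γ∩(U,V)|; and when the matching holds, ᶠᵍ(U,μ) * ᵍʰ(V,ν) = ᶠʰ((U,μ)*(V,ν)). -/

import Mathlib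

open scoped Pointwise

section StarPrelude

variable {F G H I : Type*} [Group F] [Group G] [Group H] [Group I]
variable {A : Type*} [CommGroup A]

/-- The star product of subgroups `U ≤ F × G` and `V ≤ G × H`. -/
def starProd (U : Subgroup (F × G)) (V : Subgroup (G × H)) : Subgroup (F × H) where
  carrier := {p | ∃ g : G, (p.1, g) ∈ U ∧ (g, p.2) ∈ V}
  one_mem' := ⟨1, U.one_mem, V.one_mem⟩
  mul_mem' := by
    rintro ⟨a, b⟩ ⟨c, d⟩ ⟨g, h1, h2⟩ ⟨g', h1', h2'⟩
    exact ⟨g * g', U.mul_mem h1 h1', V.mul_mem h2 h2'⟩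
  inv_mem' := by
    rintro ⟨a, b⟩ ⟨g, h1, h2⟩
    exact ⟨g⁻¹, U.inv_mem h1, V.inv_mem h2⟩

infixl:70 " ⋆ " => starProd

theorem mem_starProd {U : Subgroup (F × G)} {V : Subgroup (G × H)} {p : F × H} :
    p ∈ U ⋆ V ↔ ∃ g : G, (p.1, g) ∈ U ∧ (g, p.2) ∈ V := Iff.rfl

/-- `Γ(U,V) = {(f,g,h) : (f,g) ∈ U, (g,h) ∈ V}`. -/
def gammaSet (U : Subgroup (F × G)) (V : Subgroup (G × H)) : Set (F × G × H) :=
  {p | (p.1, p.2.1) ∈ U ∧ (p.2.1, p.2.2) ∈ V}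

/-- `Γ∩(U,V) = {g ∈ G : (1,g) ∈ U and (g,1) ∈ V}`. -/
def gammaCap (U : Subgroup (F × G)) (V : Subgroup (G × H)) : Set G :=
  {g | ((1 : F), g) ∈ U ∧ (g, (1 : H)) ∈ V}

/-- `p₁(U)`, the image of `U ≤ F × G` in `F`. -/
def proj1 (U : Subgroup (F × G)) : Subgroup F := U.map (MonoidHom.fst F G)

/-- `p₂(U)`, the image of `U ≤ F × G` in `G`. -/
def proj2 (U : Subgroup (F × G)) : Subgroup G := U.map (MonoidHom.snd F G)

/-- `k₁(U) = {f : (f,1) ∈ U}`. -/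
def ker1 (U : Subgroup (F × G)) : Set F := {f | (f, (1 : G)) ∈ U}

/-- `k₂(U) = {g : (1,g) ∈ U}`. -/
def ker2 (U : Subgroup (F × G)) : Set G := {g | ((1 : F), g) ∈ U}

end StarPrelude
section CharPrelude

variable {F G H I : Type*} [Group F] [Group G] [Group H] [Group I]
variable {A : Type*} [CommGroup A]

/-- The conjugate `ᵉU = e·U·e⁻¹` of a subgroup `U` of `E`. -/
def conjSub {E : Type*} [Group E] (e : E) (U : Subgroup E) : Subgroup E :=
  U.map (MulAut.conj e).toMonoidHom

/-- The conjugate `ᵉμ` of an `A`-character `μ : U → A`, defined by `ᵉμ(e·t·e⁻¹) = μ(t)`. -/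
def conjChar {E : Type*} [Group E] (e : E) {U : Subgroup E} (μ : U →* A) :
    conjSub e U →* A :=
  μ.comp ((MulAut.conj e).subgroupMap U).symm.toMonoidHom

/-- The matching relation `(U,μ) ∼ (V,ν)`: `μ(1,g)·ν(g,1) = 1` for all `g ∈ Γ∩(U,V)`. -/
def Matches {U : Subgroup (F × G)} {V : Subgroup (G × H)} (μ : U →* A) (ν : V →* A) : Prop :=
  ∀ (g : G) (hU : ((1 : F), g) ∈ U) (hV : (g, (1 : H)) ∈ V),
    μ ⟨(1, g), hU⟩ * ν ⟨(g, 1), hV⟩ = 1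

theorem charStar_aux {U : Subgroup (F × G)} {V : Subgroup (G × H)}
    {μ : U →* A} {ν : V →* A} (hm : Matches μ ν)
    (f : F) (k : H) (g g' : G)
    (h1 : (f, g) ∈ U) (h2 : (g, k) ∈ V) (h1' : (f, g') ∈ U) (h2' : (g', k) ∈ V) :
    μ ⟨(f, g), h1⟩ * ν ⟨(g, k), h2⟩ = μ ⟨(f, g'), h1'⟩ * ν ⟨(g', k), h2'⟩ := by
  have hx1 : ((1 : F), g * g'⁻¹) ∈ U := by
    have := U.mul_mem h1 (U.inv_mem h1')
    simpa [Prod.ext_iff] using this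
  have hx2 : (g * g'⁻¹, (1 : H)) ∈ V := by
    have := V.mul_mem h2 (V.inv_mem h2')
    simpa [Prod.ext_iff] using this
  have key := hm (g * g'⁻¹) hx1 hx2
  have e1 : (⟨(f, g), h1⟩ : U) = ⟨((1 : F), g * g'⁻¹), hx1⟩ * ⟨(f, g'), h1'⟩ := by
    apply Subtype.ext
    simp [Prod.ext_iff]
  have e2 : (⟨(g, k), h2⟩ : V) = ⟨(g * g'⁻¹, (1 : H)), hx2⟩ * ⟨(g', k), h2'⟩ := by
    apply Subtype.ext
    simp [Prod.ext_iff]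
  rw [e1, e2, map_mul, map_mul, mul_mul_mul_comm, key, one_mul]

/-- The underlying function of the star product `μ * ν` of two matching `A`-characters. -/
noncomputable def charStarFun {U : Subgroup (F × G)} {V : Subgroup (G × H)}
    (μ : U →* A) (ν : V →* A) (p : U ⋆ V) : A :=
  μ ⟨((p : F × H).1, (mem_starProd.mp p.2).choose), (mem_starProd.mp p.2).choose_spec.1⟩ *
    ν ⟨((mem_starProd.mp p.2).choose, (p : F × H).2), (mem_starProd.mp p.2).choose_spec.2⟩

theorem charStarFun_eq {U : Subgroup (F × G)} {V : Subgroup (G × H)}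
    {μ : U →* A} {ν : V →* A} (hm : Matches μ ν) (p : U ⋆ V) (g : G)
    (h1 : ((p : F × H).1, g) ∈ U) (h2 : (g, (p : F × H).2) ∈ V) :
    charStarFun μ ν p = μ ⟨((p : F × H).1, g), h1⟩ * ν ⟨(g, (p : F × H).2), h2⟩ :=
  charStar_aux hm _ _ _ _ _ _ h1 h2

/-- The star product `μ * ν : U * V → A` of two matching `A`-characters, characterized by
`(μ * ν)(f,h) = μ(f,g)·ν(g,h)` whenever `(f,g) ∈ U` and `(g,h) ∈ V`. -/
noncomputable def charStar {U : Subgroup (F × G)} {V : Subgroup (G × H)}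
    {μ : U →* A} {ν : V →* A} (hm : Matches μ ν) : (U ⋆ V : Subgroup (F × H)) →* A where
  toFun := charStarFun μ ν
  map_one' := by
    show charStarFun μ ν 1 = 1
    rw [charStarFun_eq hm 1 1 (by first | exact U.one_mem | (simp; exact U.one_mem)) (by first | exact V.one_mem | (simp; exact V.one_mem))]
    have e1 : (⟨(((1 : U ⋆ V) : F × H).1, (1 : G)), by first | exact U.one_mem | (simp; exact U.one_mem)⟩ : U) = 1 := by
      apply Subtype.ext; simp [Prod.ext_iff]
    have e2 : (⟨((1 : G), ((1 : U ⋆ V) : F × H).2), by first | exact V.one_mem | (simp; exact V.one_mem)⟩ : V) = 1 := by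
      apply Subtype.ext; simp [Prod.ext_iff]
    rw [e1, e2, map_one, map_one, one_mul]
  map_mul' p q := by
    show charStarFun μ ν (p * q) = charStarFun μ ν p * charStarFun μ ν q
    obtain ⟨gp, hp1, hp2⟩ := mem_starProd.mp p.2
    obtain ⟨gq, hq1, hq2⟩ := mem_starProd.mp q.2
    have hpq1 : (((p * q : U ⋆ V) : F × H).1, gp * gq) ∈ U := by
      have := U.mul_mem hp1 hq1
      simpa [Prod.ext_iff] using this
    have hpq2 : (gp * gq, ((p * q : U ⋆ V) : F × H).2) ∈ V := by
      have := V.mul_mem hp2 hq2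
      simpa [Prod.ext_iff] using this
    rw [charStarFun_eq hm p gp hp1 hp2, charStarFun_eq hm q gq hq1 hq2,
      charStarFun_eq hm (p * q) (gp * gq) hpq1 hpq2]
    have e1 : (⟨(((p * q : U ⋆ V) : F × H).1, gp * gq), hpq1⟩ : U) =
        ⟨(((p : F × H)).1, gp), hp1⟩ * ⟨(((q : F × H)).1, gq), hq1⟩ := by
      apply Subtype.ext; simp [Prod.ext_iff]
    have e2 : (⟨(gp * gq, ((p * q : U ⋆ V) : F × H).2), hpq2⟩ : V) =
        ⟨(gp, ((p : F × H)).2), hp2⟩ * ⟨(gq, ((q : F × H)).2), hq2⟩ := by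
      apply Subtype.ext; simp [Prod.ext_iff]
    rw [e1, e2, map_mul, map_mul, mul_mul_mul_comm]

theorem charStar_apply {U : Subgroup (F × G)} {V : Subgroup (G × H)}
    {μ : U →* A} {ν : V →* A} (hm : Matches μ ν) (p : F × H) (hp : p ∈ U ⋆ V)
    (g : G) (h1 : (p.1, g) ∈ U) (h2 : (g, p.2) ∈ V) :
    charStar hm ⟨p, hp⟩ = μ ⟨(p.1, g), h1⟩ * ν ⟨(g, p.2), h2⟩ :=
  charStarFun_eq hm ⟨p, hp⟩ g h1 h2

end CharPrelude

section MyAux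
variable {E : Type*} [Group E] {A : Type*} [CommGroup A]

theorem my_mem_conjSub {e x : E} {U : Subgroup E} : x ∈ conjSub e U ↔ e⁻¹ * x * e ∈ U := by
  constructor
  · rintro ⟨u, hu, rfl⟩
    simpa [MulAut.conj, mul_assoc] using hu
  · intro hx
    exact ⟨e⁻¹ * x * e, hx, by simp [MulAut.conj]; group⟩

theorem my_conjChar_apply {e x : E} {U : Subgroup E} (μ : U →* A)
    (h : e⁻¹ * x * e ∈ U) (h' : x ∈ conjSub e U) :
    conjChar e μ ⟨x, h'⟩ = μ ⟨e⁻¹ * x * e, h⟩ := by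
  have key : (((MulAut.conj e).subgroupMap U).symm ⟨x, h'⟩ : U) = ⟨e⁻¹ * x * e, h⟩ := by
    rw [MulEquiv.symm_apply_eq]
    apply Subtype.ext
    rw [MulEquiv.coe_subgroupMap_apply]
    simp [MulAut.conj]
    group
  exact congrArg μ key

variable {F G : Type*} [Group F] [Group G]

theorem my_mem_conjSub_pair {a : F} {b : G} {x : F × G} {U : Subgroup (F × G)} :
    x ∈ conjSub (a, b) U ↔ (a⁻¹ * x.1 * a, b⁻¹ * x.2 * b) ∈ U :=
  my_mem_conjSub

theorem my_conjChar_apply_pair {a : F} {b : G} {x : F × G} {U : Subgroup (F × G)}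
    (μ : U →* A) (h : (a⁻¹ * x.1 * a, b⁻¹ * x.2 * b) ∈ U) (h' : x ∈ conjSub (a, b) U) :
    conjChar (a, b) μ ⟨x, h'⟩ = μ ⟨(a⁻¹ * x.1 * a, b⁻¹ * x.2 * b), h⟩ :=
  my_conjChar_apply μ h h'

end MyAux

/-- For `f ∈ F`, `g ∈ G`, `h ∈ H`:
`ᶠᵍ(U,μ) ∼ ᵍʰ(V,ν)` iff `(U,μ) ∼ (V,ν)`; `Γ∩(ᶠᵍU, ᵍʰV) = g·Γ∩(U,V)·g⁻¹`, so in
particular the two sets have the same cardinality; and, when the matching holds,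
`ᶠᵍ(U,μ) * ᵍʰ(V,ν) = ᶠʰ((U,μ)*(V,ν))`. -/
theorem stmt12 {F G H : Type*} [Group F] [Group G] [Group H]
    [Finite F] [Finite G] [Finite H] {A : Type*} [CommGroup A]
    {U : Subgroup (F × G)} {V : Subgroup (G × H)} (μ : U →* A) (ν : V →* A)
    (f : F) (g : G) (h : H) :
    (Matches (conjChar ((f, g) : F × G) μ) (conjChar ((g, h) : G × H) ν) ↔
      Matches μ ν) ∧
    (gammaCap (conjSub ((f, g) : F × G) U) (conjSub ((g, h) : G × H) V) =
      (fun x => g * x * g⁻¹) '' gammaCap U V) ∧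
    (Nat.card (gammaCap (conjSub ((f, g) : F × G) U) (conjSub ((g, h) : G × H) V)) =
      Nat.card (gammaCap U V)) ∧
    (∀ (hm : Matches μ ν)
      (hm' : Matches (conjChar ((f, g) : F × G) μ) (conjChar ((g, h) : G × H) ν)),
      conjSub ((f, g) : F × G) U ⋆ conjSub ((g, h) : G × H) V =
        conjSub ((f, h) : F × H) (U ⋆ V) ∧
      ∀ (p : F × H) (hp : p ∈ conjSub ((f, g) : F × G) U ⋆ conjSub ((g, h) : G × H) V)
        (hp' : p ∈ conjSub ((f, h) : F × H) (U ⋆ V)),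
        charStar hm' ⟨p, hp⟩ = conjChar ((f, h) : F × H) (charStar hm) ⟨p, hp'⟩) := by
  
  constructor
  · -- matching iff
    constructor
    · intro hm' x hU hV
      have e1 : ((1 : F), g * x * g⁻¹) ∈ conjSub ((f, g) : F × G) U := by
        rw [my_mem_conjSub_pair]
        simpa [mul_assoc] using hU
      have e2 : (g * x * g⁻¹, (1 : H)) ∈ conjSub ((g, h) : G × H) V := by
        rw [my_mem_conjSub_pair]
        simpa [mul_assoc] using hV
      have key := hm' (g * x * g⁻¹) e1 e2
      rw [my_conjChar_apply_pair μ (by simpa [mul_assoc] using hU) e1,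
        my_conjChar_apply_pair ν (by simpa [mul_assoc] using hV) e2] at key
      rw [show (⟨((1 : F), x), hU⟩ : U) = ⟨(f⁻¹ * ((1:F), g * x * g⁻¹).1 * f,
            g⁻¹ * ((1:F), g * x * g⁻¹).2 * g), by simpa [mul_assoc] using hU⟩ from
          Subtype.ext (by simp [Prod.ext_iff, mul_assoc]),
        show (⟨(x, (1 : H)), hV⟩ : V) = ⟨(g⁻¹ * (g * x * g⁻¹, (1:H)).1 * g,
            h⁻¹ * (g * x * g⁻¹, (1:H)).2 * h), by simpa [mul_assoc] using hV⟩ from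
          Subtype.ext (by simp [Prod.ext_iff, mul_assoc])]
      exact key
    · intro hm x hU' hV'
      have hU := my_mem_conjSub_pair.mp hU'
      have hV := my_mem_conjSub_pair.mp hV'
      have hU2 : ((1 : F), g⁻¹ * x * g) ∈ U := by simpa using hU
      have hV2 : (g⁻¹ * x * g, (1 : H)) ∈ V := by simpa using hV
      have key := hm (g⁻¹ * x * g) hU2 hV2
      rw [my_conjChar_apply_pair μ hU hU', my_conjChar_apply_pair ν hV hV']
      rw [show (⟨(f⁻¹ * ((1:F), x).1 * f, g⁻¹ * ((1:F), x).2 * g), hU⟩ : U) =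
            ⟨((1 : F), g⁻¹ * x * g), hU2⟩ from Subtype.ext (by simp [Prod.ext_iff]),
        show (⟨(g⁻¹ * (x, (1:H)).1 * g, h⁻¹ * (x, (1:H)).2 * h), hV⟩ : V) =
            ⟨(g⁻¹ * x * g, (1 : H)), hV2⟩ from Subtype.ext (by simp [Prod.ext_iff])]
      exact key
  refine ⟨?_, ?_, ?_⟩
  · -- gammaCap equality
    ext x
    constructor
    · rintro ⟨hU', hV'⟩
      refine ⟨g⁻¹ * x * g, ⟨?_, ?_⟩, by group⟩
      · simpa using my_mem_conjSub_pair.mp hU'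
      · simpa using my_mem_conjSub_pair.mp hV'
    · rintro ⟨y, ⟨hU, hV⟩, rfl⟩
      constructor
      · rw [my_mem_conjSub_pair]; simpa [mul_assoc] using hU
      · rw [my_mem_conjSub_pair]; simpa [mul_assoc] using hV
  · -- cardinality
    have e : gammaCap (conjSub ((f, g) : F × G) U) (conjSub ((g, h) : G × H) V) =
        (fun x => g * x * g⁻¹) '' gammaCap U V := by
      ext x
      constructor
      · rintro ⟨hU', hV'⟩
        refine ⟨g⁻¹ * x * g, ⟨?_, ?_⟩, by group⟩
        · simpa using my_mem_conjSub_pair.mp hU'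
        · simpa using my_mem_conjSub_pair.mp hV'
      · rintro ⟨y, ⟨hU, hV⟩, rfl⟩
        constructor
        · rw [my_mem_conjSub_pair]; simpa [mul_assoc] using hU
        · rw [my_mem_conjSub_pair]; simpa [mul_assoc] using hV
    rw [e]
    exact Nat.card_image_of_injective
      (fun a b hab => by
        have : g * a * g⁻¹ = g * b * g⁻¹ := hab
        simpa using (MulAut.conj g).injective (by simpa using this)) _
  · -- star product
    intro hm hm'
    have hsub : conjSub ((f, g) : F × G) U ⋆ conjSub ((g, h) : G × H) V =
        conjSub ((f, h) : F × H) (U ⋆ V) := by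
      ext p
      rw [mem_starProd, my_mem_conjSub_pair, mem_starProd]
      constructor
      · rintro ⟨x, h1, h2⟩
        refine ⟨g⁻¹ * x * g, ?_, ?_⟩
        · simpa using my_mem_conjSub_pair.mp h1
        · simpa using my_mem_conjSub_pair.mp h2
      · rintro ⟨y, h1, h2⟩
        refine ⟨g * y * g⁻¹, ?_, ?_⟩
        · rw [my_mem_conjSub_pair]; simpa [mul_assoc] using h1
        · rw [my_mem_conjSub_pair]; simpa [mul_assoc] using h2
    refine ⟨hsub, ?_⟩
    intro p hp hp'
    have hpUV : (f⁻¹ * p.1 * f, h⁻¹ * p.2 * h) ∈ U ⋆ V := my_mem_conjSub_pair.mp hp'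
    obtain ⟨y, hy1, hy2⟩ := mem_starProd.mp hpUV
    have h1 : (p.1, g * y * g⁻¹) ∈ conjSub ((f, g) : F × G) U := by
      rw [my_mem_conjSub_pair]; simpa [mul_assoc] using hy1
    have h2 : (g * y * g⁻¹, p.2) ∈ conjSub ((g, h) : G × H) V := by
      rw [my_mem_conjSub_pair]; simpa [mul_assoc] using hy2
    rw [charStar_apply hm' p hp (g * y * g⁻¹) h1 h2]
    rw [my_conjChar_apply_pair μ (by simpa [mul_assoc] using hy1) h1,
      my_conjChar_apply_pair ν (by simpa [mul_assoc] using hy2) h2]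
    rw [my_conjChar_apply_pair (charStar hm) hpUV hp']
    rw [charStar_apply hm (f⁻¹ * p.1 * f, h⁻¹ * p.2 * h) hpUV y hy1 hy2]
    congr 1
    · exact congrArg μ (Subtype.ext (by simp [Prod.ext_iff, mul_assoc]))
    · exact congrArg ν (Subtype.ext (by simp [Prod.ext_iff, mul_assoc]))
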